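/- Suppose M is an irreducible entrywise nonnegative matrix with ρ(M) ≤ 1. Then the fluid model is weakly stable: every fluid model solution with Q(0) = 0 satisfies Q(t) = 0 for all t ≥ 0. -/

import Mathlib

open Matrix MeasureTheory Filter Set

/-- The spectral radius of a real square matrix: the maximum modulus of its
complex eigenvalues (roots of the characteristic polynomial over `ℂ`). -/
noncomputable def specRad {K : ℕ} (A : Matrix (Fin K) (Fin K) ℝ) : ℝ :=
  sSup {r : ℝ | ∃ z : ℂ, (A.map (Complex.ofReal)).charpoly.IsRoot z ∧ r = ‖z‖}

/-- The data of the multiclass fluid model: a nonnegative matrix of arrival rates `Λ`,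
a nonnegative vector `lam0` of arrival rates when the system is empty, and positive
service rates `μ`. -/
structure FluidData (K : ℕ) where
  Λ : Matrix (Fin K) (Fin K) ℝ
  lam0 : Fin K → ℝ
  μ : Fin K → ℝ
  Λ_nonneg : ∀ i j, 0 ≤ Λ i j
  lam0_nonneg : ∀ i, 0 ≤ lam0 i
  μ_pos : ∀ i, 0 < μ i

namespace FluidData

variable {K : ℕ}

/-- `G = diag(μ₁, …, μ_K)`. -/
noncomputable def G (fd : FluidData K) : Matrix (Fin K) (Fin K) ℝ :=
  Matrix.diagonal fd.μ

/-- `M = G⁻¹ Λ`. -/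
noncomputable def M (fd : FluidData K) : Matrix (Fin K) (Fin K) ℝ :=
  fd.G⁻¹ * fd.Λ

/-- `H = G M G⁻¹`. -/
noncomputable def H (fd : FluidData K) : Matrix (Fin K) (Fin K) ℝ :=
  fd.G * fd.M * fd.G⁻¹

end FluidData

/-- A fluid model solution: queue-length process `Q` and cumulative-service process `T`
(on `[0,∞)`; values for negative times are irrelevant), where each `Tᵢ` is Lipschitz,
nondecreasing, starts at `0`; the idle time `Y t = t - ∑ᵢ Tᵢ t` is nondecreasing;
the dynamics `Q t = Q 0 + (Mᵀ - I) G T t + (Y t) • λ₀` hold; `Q` is componentwise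
nonnegative; and the non-idling condition holds: `Y` is constant on any interval
on which `Q` never vanishes. -/
structure FluidSol {K : ℕ} (fd : FluidData K) where
  Q : ℝ → Fin K → ℝ
  T : ℝ → Fin K → ℝ
  T_lip : ∀ i, ∃ L : NNReal, LipschitzWith L (fun t => T t i)
  T_mono : ∀ i, MonotoneOn (fun t => T t i) (Set.Ici (0 : ℝ))
  T_zero : ∀ i, T 0 i = 0
  Y_mono : MonotoneOn (fun t => t - ∑ i, T t i) (Set.Ici (0 : ℝ))
  dynamics : ∀ t : ℝ, 0 ≤ t →
    Q t = Q 0 + (fd.M.transpose - 1) *ᵥ (fd.G *ᵥ T t) + (t - ∑ i, T t i) • fd.lam0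
  Q_nonneg : ∀ t : ℝ, 0 ≤ t → ∀ i, 0 ≤ Q t i
  nonidling : ∀ s t : ℝ, 0 ≤ s → s ≤ t → (∀ u ∈ Set.Icc s t, Q u ≠ 0) →
    s - ∑ i, T s i = t - ∑ i, T t i


section Stmt4Aux

open Polynomial Finset Topology

variable {K : ℕ}

lemma eval_charpoly {K : ℕ} (A : Matrix (Fin K) (Fin K) ℂ) (x : ℂ) :
    A.charpoly.eval x = (x • (1 : Matrix (Fin K) (Fin K) ℂ) - A).det := by
  rw [Matrix.charpoly, ← Polynomial.coe_evalRingHom, RingHom.map_det]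
  congr 1
  ext i j
  by_cases h : i = j <;>
    simp [Matrix.charmatrix_apply, h, Matrix.one_apply, Matrix.smul_apply, Matrix.sub_apply,
      Matrix.diagonal_apply]

lemma root_bound {K : ℕ} (A : Matrix (Fin K) (Fin K) ℝ) (h : specRad A ≤ 1)
    {z : ℂ} (hz : (A.map Complex.ofReal).charpoly.IsRoot z) : ‖z‖ ≤ 1 := by
  refine le_trans (le_trans ?_ (le_refl (specRad A))) h
  apply le_csSup
  · have hfin : {r : ℝ | ∃ z : ℂ, (A.map Complex.ofReal).charpoly.IsRoot z ∧ r = ‖z‖}.Finite := by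
      have hne : (A.map Complex.ofReal).charpoly ≠ 0 :=
        (Matrix.charpoly_monic _).ne_zero
      have := (Polynomial.finite_setOf_isRoot hne).image (fun z : ℂ => ‖z‖)
      refine this.subset ?_
      rintro r ⟨w, hw, rfl⟩
      exact ⟨w, hw, rfl⟩
    exact hfin.bddAbove
  · exact ⟨z, hz, rfl⟩

lemma entry_pow_nonneg (M : Matrix (Fin K) (Fin K) ℝ) (hM : ∀ i j, 0 ≤ M i j) :
    ∀ n, ∀ i j, 0 ≤ (M ^ n) i j := by
  intro n
  induction n with
  | zero => intro i j; by_cases h : i = j <;> simp [Matrix.one_apply, h]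
  | succ n ih =>
    intro i j
    rw [pow_succ, Matrix.mul_apply]
    exact Finset.sum_nonneg fun k _ => mul_nonneg (ih i k) (hM k j)

lemma entry_mul_nonneg (A B : Matrix (Fin K) (Fin K) ℝ) (hA : ∀ i j, 0 ≤ A i j)
    (hB : ∀ i j, 0 ≤ B i j) : ∀ i j, 0 ≤ (A * B) i j := by
  intro i j
  rw [Matrix.mul_apply]
  exact Finset.sum_nonneg fun k _ => mul_nonneg (hA i k) (hB k j)

lemma B_identity (M : Matrix (Fin K) (Fin K) ℝ) {s : ℝ}
    (hu : IsUnit ((1 : Matrix (Fin K) (Fin K) ℝ) - s • M).det) :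
    ((1 : Matrix (Fin K) (Fin K) ℝ) - s • M)⁻¹
      = 1 + s • (M * ((1 : Matrix (Fin K) (Fin K) ℝ) - s • M)⁻¹) := by
  have h := Matrix.mul_nonsing_inv _ hu
  rw [sub_mul, one_mul, smul_mul_assoc, sub_eq_iff_eq_add] at h
  exact h

lemma B_partial (M : Matrix (Fin K) (Fin K) ℝ) {s : ℝ}
    (hu : IsUnit ((1 : Matrix (Fin K) (Fin K) ℝ) - s • M).det) (N : ℕ) :
    ((1 : Matrix (Fin K) (Fin K) ℝ) - s • M)⁻¹
      = (∑ n ∈ Finset.range N, s ^ n • M ^ n)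
        + s ^ N • (M ^ N * ((1 : Matrix (Fin K) (Fin K) ℝ) - s • M)⁻¹) := by
  induction N with
  | zero => simp
  | succ N ih =>
    conv_lhs => rw [ih]
    rw [Finset.sum_range_succ]
    have : s ^ N • (M ^ N * ((1 : Matrix (Fin K) (Fin K) ℝ) - s • M)⁻¹)
        = s ^ N • M ^ N + s ^ (N+1) • (M ^ (N+1) * ((1 : Matrix (Fin K) (Fin K) ℝ) - s • M)⁻¹) := by
      conv_lhs => rw [B_identity M hu]
      rw [mul_add, mul_one, smul_add]
      congr 1
      rw [mul_smul_comm, smul_smul, ← mul_assoc, ← pow_succ, ← pow_succ]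
    rw [this, add_assoc]

lemma B_diag_ge_one (M : Matrix (Fin K) (Fin K) ℝ) (hM : ∀ i j, 0 ≤ M i j) {s : ℝ}
    (hs : 0 ≤ s)
    (hu : IsUnit ((1 : Matrix (Fin K) (Fin K) ℝ) - s • M).det)
    (hBnn : ∀ i j, 0 ≤ ((1 : Matrix (Fin K) (Fin K) ℝ) - s • M)⁻¹ i j) :
    ∀ j, 1 ≤ ((1 : Matrix (Fin K) (Fin K) ℝ) - s • M)⁻¹ j j := by
  intro j
  have h := congrFun (congrFun (B_identity M hu) j) j
  simp only [Matrix.add_apply, Matrix.smul_apply, Matrix.one_apply_eq, smul_eq_mul] at h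
  have h2 : 0 ≤ s * (M * ((1 : Matrix (Fin K) (Fin K) ℝ) - s • M)⁻¹) j j :=
    mul_nonneg hs (entry_mul_nonneg M _ hM hBnn j j)
  rw [h]
  linarith

lemma B_pos_of_nonneg (M : Matrix (Fin K) (Fin K) ℝ) (hM : ∀ i j, 0 ≤ M i j)
    (hirr : ∀ i j, ∃ n : ℕ, 1 ≤ n ∧ 0 < (M ^ n) i j) {s : ℝ} (hs0 : 0 < s)
    (hu : IsUnit ((1 : Matrix (Fin K) (Fin K) ℝ) - s • M).det)
    (hBnn : ∀ i j, 0 ≤ ((1 : Matrix (Fin K) (Fin K) ℝ) - s • M)⁻¹ i j) :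
    ∀ i j, 0 < ((1 : Matrix (Fin K) (Fin K) ℝ) - s • M)⁻¹ i j := by
  intro i j
  obtain ⟨n, -, hn⟩ := hirr i j
  have key := congrFun (congrFun (B_partial M hu (n+1)) i) j
  simp only [Matrix.add_apply, Matrix.smul_apply, smul_eq_mul] at key
  have hsum : 0 ≤ (∑ m ∈ Finset.range (n+1), s ^ m • M ^ m) i j := by
    rw [Matrix.sum_apply]
    refine Finset.sum_nonneg fun m _ => ?_
    simp only [Matrix.smul_apply, smul_eq_mul]
    exact mul_nonneg (pow_nonneg hs0.le m) (entry_pow_nonneg M hM m i j)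
  have hsum2 : s ^ n * (M ^ n) i j ≤ (∑ m ∈ Finset.range (n+1), s ^ m • M ^ m) i j := by
    rw [Matrix.sum_apply]
    have := Finset.single_le_sum (f := fun m => (s ^ m • M ^ m) i j)
      (fun m _ => by
        simp only [Matrix.smul_apply, smul_eq_mul]
        exact mul_nonneg (pow_nonneg hs0.le m) (entry_pow_nonneg M hM m i j))
      (Finset.self_mem_range_succ n)
    simp only [Matrix.smul_apply, smul_eq_mul] at this
    exact this
  have hrem : 0 ≤ s ^ (n+1) * (M ^ (n+1) * ((1 : Matrix (Fin K) (Fin K) ℝ) - s • M)⁻¹) i j :=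
    mul_nonneg (pow_nonneg hs0.le _)
      (entry_mul_nonneg _ _ (entry_pow_nonneg M hM (n+1)) hBnn i j)
  have hpos : 0 < s ^ n * (M ^ n) i j := mul_pos (pow_pos hs0 n) hn
  rw [key]
  linarith

lemma isUnit_det_one_sub {K : ℕ} (M : Matrix (Fin K) (Fin K) ℝ)
    (hroots : ∀ z : ℂ, (M.map Complex.ofReal).charpoly.IsRoot z → ‖z‖ ≤ 1)
    {s : ℝ} (hs : s ∈ Set.Ioo (0:ℝ) 1) :
    IsUnit ((1 : Matrix (Fin K) (Fin K) ℝ) - s • M).det := by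
  obtain ⟨hs0, hs1⟩ := hs
  rw [isUnit_iff_ne_zero]
  intro h
  set Mc := M.map Complex.ofReal with hMc
  have hmap : ((1 : Matrix (Fin K) (Fin K) ℝ) - s • M).map Complex.ofReal
      = (1 : Matrix (Fin K) (Fin K) ℂ) - (s:ℂ) • Mc := by
    ext i j
    by_cases hij : i = j <;>
      simp [Matrix.map_apply, Matrix.one_apply, hij, Matrix.sub_apply, Matrix.smul_apply, hMc]
  have hdetC : ((1 : Matrix (Fin K) (Fin K) ℂ) - (s:ℂ) • Mc).det = 0 := by
    have h2 := RingHom.map_det Complex.ofRealHom ((1 : Matrix (Fin K) (Fin K) ℝ) - s • M)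
    rw [RingHom.mapMatrix_apply] at h2
    have h3 : ((1 : Matrix (Fin K) (Fin K) ℝ) - s • M).map (⇑(Complex.ofRealHom : ℝ →+* ℂ))
        = ((1 : Matrix (Fin K) (Fin K) ℝ) - s • M).map Complex.ofReal := rfl
    rw [h3, hmap] at h2
    rw [← h2, h, map_zero]
  have hsne : (s:ℂ) ≠ 0 := by exact_mod_cast hs0.ne'
  have hfact : (1 : Matrix (Fin K) (Fin K) ℂ) - (s:ℂ) • Mc
      = (s:ℂ) • (((s:ℂ)⁻¹) • (1 : Matrix (Fin K) (Fin K) ℂ) - Mc) := by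
    rw [smul_sub, smul_smul, mul_inv_cancel₀ hsne, one_smul]
  rw [hfact, Matrix.det_smul] at hdetC
  have hdet0 : (((s:ℂ)⁻¹) • (1 : Matrix (Fin K) (Fin K) ℂ) - Mc).det = 0 := by
    have hpow : ((s:ℂ)) ^ Fintype.card (Fin K) ≠ 0 := pow_ne_zero _ hsne
    exact (mul_eq_zero.mp hdetC).resolve_left hpow
  have hroot : Mc.charpoly.IsRoot ((s:ℂ)⁻¹) := by
    rw [Polynomial.IsRoot, _root_.eval_charpoly, hdet0]
  have := hroots _ hroot
  rw [norm_inv, Complex.norm_real, Real.norm_of_nonneg hs0.le] at this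
  have : (1:ℝ) ≤ s := by
    have hspos : 0 < s := hs0
    calc (1:ℝ) = s * s⁻¹ := (mul_inv_cancel₀ hspos.ne').symm
    _ ≤ s * 1 := by nlinarith [inv_pos.mpr hspos]
    _ = s := mul_one s
  linarith

section t4
variable (M : Matrix (Fin K) (Fin K) ℝ)

lemma det_cont : Continuous fun s : ℝ => ((1 : Matrix (Fin K) (Fin K) ℝ) - s • M).det :=
  Continuous.matrix_det (continuous_const.sub (continuous_id.smul continuous_const))

lemma D_open : IsOpen {s : ℝ | ((1 : Matrix (Fin K) (Fin K) ℝ) - s • M).det ≠ 0} :=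
  isOpen_compl_singleton.preimage (det_cont M)

lemma B_contOn : ContinuousOn (fun s : ℝ => ((1 : Matrix (Fin K) (Fin K) ℝ) - s • M)⁻¹)
    {s : ℝ | ((1 : Matrix (Fin K) (Fin K) ℝ) - s • M).det ≠ 0} := by
  intro s hs
  have hdet : IsUnit ((1 : Matrix (Fin K) (Fin K) ℝ) - s • M).det := isUnit_iff_ne_zero.mpr hs
  have h1 : ContinuousAt Ring.inverse ((1 : Matrix (Fin K) (Fin K) ℝ) - s • M).det := by
    have := NormedRing.inverse_continuousAt hdet.unit
    rwa [IsUnit.unit_spec] at this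
  have h2 : ContinuousAt Inv.inv ((1 : Matrix (Fin K) (Fin K) ℝ) - s • M) :=
    continuousAt_matrix_inv _ h1
  have h3 : ContinuousAt (fun s : ℝ => (1 : Matrix (Fin K) (Fin K) ℝ) - s • M) s :=
    (continuous_const.sub (continuous_id.smul continuous_const)).continuousAt
  show ContinuousWithinAt (Inv.inv ∘ fun s : ℝ => (1 : Matrix (Fin K) (Fin K) ℝ) - s • M) _ s
  exact (ContinuousAt.comp (f := fun s : ℝ => (1 : Matrix (Fin K) (Fin K) ℝ) - s • M)
    (g := Inv.inv) h2 h3).continuousWithinAt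

lemma entry_cont (i j : Fin K) : Continuous fun A : Matrix (Fin K) (Fin K) ℝ => A i j :=
  (continuous_apply j).comp (continuous_apply i)

lemma U_open : IsOpen {s : ℝ | ((1 : Matrix (Fin K) (Fin K) ℝ) - s • M).det ≠ 0
    ∧ ∀ i j, 0 < ((1 : Matrix (Fin K) (Fin K) ℝ) - s • M)⁻¹ i j} := by
  have ht : IsOpen {A : Matrix (Fin K) (Fin K) ℝ | ∀ i j, 0 < A i j} := by
    have : {A : Matrix (Fin K) (Fin K) ℝ | ∀ i j, 0 < A i j}
        = ⋂ i, ⋂ j, (fun A : Matrix (Fin K) (Fin K) ℝ => A i j) ⁻¹' (Set.Ioi 0) := by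
      ext A; simp [Set.mem_iInter]
    rw [this]
    exact isOpen_iInter_of_finite fun i => isOpen_iInter_of_finite fun j =>
      isOpen_Ioi.preimage (entry_cont i j)
  have := (B_contOn M).isOpen_inter_preimage (D_open M) ht
  exact this

lemma W_open : IsOpen {s : ℝ | ((1 : Matrix (Fin K) (Fin K) ℝ) - s • M).det ≠ 0
    ∧ ∃ i j, ((1 : Matrix (Fin K) (Fin K) ℝ) - s • M)⁻¹ i j < 0} := by
  have ht : IsOpen {A : Matrix (Fin K) (Fin K) ℝ | ∃ i j, A i j < 0} := by
    have : {A : Matrix (Fin K) (Fin K) ℝ | ∃ i j, A i j < 0}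
        = ⋃ i, ⋃ j, (fun A : Matrix (Fin K) (Fin K) ℝ => A i j) ⁻¹' (Set.Iio 0) := by
      ext A; simp [Set.mem_iUnion]
    rw [this]
    exact isOpen_iUnion fun i => isOpen_iUnion fun j => isOpen_Iio.preimage (entry_cont i j)
  have := (B_contOn M).isOpen_inter_preimage (D_open M) ht
  exact this

end t4

lemma exists_small_s (M : Matrix (Fin K) (Fin K) ℝ) (hM : ∀ i j, 0 ≤ M i j)
    (hirr : ∀ i j, ∃ n : ℕ, 1 ≤ n ∧ 0 < (M ^ n) i j)
    (hroots : ∀ z : ℂ, (M.map Complex.ofReal).charpoly.IsRoot z → ‖z‖ ≤ 1) :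
    ∃ s ∈ Set.Ioo (0:ℝ) 1, ∀ i j, 0 < ((1 : Matrix (Fin K) (Fin K) ℝ) - s • M)⁻¹ i j := by
  classical
  set B : ℝ → Matrix (Fin K) (Fin K) ℝ := fun s => ((1 : Matrix (Fin K) (Fin K) ℝ) - s • M)⁻¹
    with hBdef
  -- continuity at 0
  have h0D : ((1 : Matrix (Fin K) (Fin K) ℝ) - (0:ℝ) • M).det ≠ 0 := by simp
  have hB0 : Filter.Tendsto B (𝓝 0) (𝓝 (B 0)) :=
    (B_contOn M).continuousAt ((D_open M).mem_nhds h0D)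
  have hB0val : B 0 = 1 := by simp [hBdef]
  -- eventually entries bounded by 2
  have hent : ∀ᶠ s in 𝓝 (0:ℝ), ∀ k j : Fin K, |B s k j| ≤ 2 := by
    rw [Filter.eventually_all]
    intro k
    rw [Filter.eventually_all]
    intro j
    have h1 : Filter.Tendsto (fun s => |B s k j|) (𝓝 0) (𝓝 |B 0 k j|) :=
      (continuous_abs.tendsto _).comp (((entry_cont k j).tendsto _).comp hB0)
    have h2 : |B 0 k j| < 2 := by
      rw [hB0val]
      by_cases h : k = j <;> simp [Matrix.one_apply, h]
    exact (h1.eventually_lt_const h2).mono fun s hs => hs.le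
  -- choose exponents
  choose n hn1 hn2 using hirr
  set N : ℕ := (Finset.univ.sup fun i => Finset.univ.sup fun j => n i j) + 1 with hNdef
  have hnN : ∀ i j, n i j < N := by
    intro i j
    have h1 : n i j ≤ Finset.univ.sup fun j => n i j := Finset.le_sup (Finset.mem_univ j)
    have h2 : (Finset.univ.sup fun j => n i j)
        ≤ Finset.univ.sup fun i => Finset.univ.sup fun j => n i j :=
      Finset.le_sup (f := fun i => Finset.univ.sup fun j => n i j) (Finset.mem_univ i)
    omega
  set c : ℝ := ∑ i, ∑ k, (M ^ N) i k with hcdef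
  have hc0 : 0 ≤ c :=
    Finset.sum_nonneg fun i _ => Finset.sum_nonneg fun k _ => entry_pow_nonneg M hM N i k
  have hrow : ∀ i, ∑ k, (M ^ N) i k ≤ c :=
    fun i => Finset.single_le_sum
      (f := fun i => ∑ k, (M ^ N) i k)
      (fun i _ => Finset.sum_nonneg fun k _ => entry_pow_nonneg M hM N i k)
      (Finset.mem_univ i)
  -- eventually smallness
  have hsmall : ∀ᶠ s in 𝓝[>] (0:ℝ), ∀ i j : Fin K,
      s ∈ Set.Ioo (0:ℝ) 1 → s ^ N * (2*c+1) < s ^ (n i j) * (M ^ (n i j)) i j := by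
    rw [Filter.eventually_all]
    intro i
    rw [Filter.eventually_all]
    intro j
    have hα : 0 < (M ^ (n i j)) i j := hn2 i j
    have hδ : 0 < (M ^ (n i j)) i j / (2*c+1) := by positivity
    have hev : ∀ᶠ s in 𝓝[>] (0:ℝ), s < (M ^ (n i j)) i j / (2*c+1) :=
      Filter.Eventually.filter_mono nhdsWithin_le_nhds (gt_mem_nhds hδ)
    filter_upwards [hev] with s hsδ hs
    obtain ⟨hs0, hs1⟩ := hs
    have hp : s ^ N ≤ s ^ (n i j) * s := by
      have : s ^ (n i j + 1) = s ^ (n i j) * s := pow_succ s (n i j)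
      rw [← this]
      exact pow_le_pow_of_le_one hs0.le hs1.le (hnN i j)
    have hs2 : s * (2*c+1) < (M ^ (n i j)) i j := by
      rw [div_eq_inv_mul] at hsδ
      have h2c : (0:ℝ) < 2*c+1 := by linarith
      calc s * (2*c+1) < ((2*c+1)⁻¹ * (M ^ (n i j)) i j) * (2*c+1) := by
            apply mul_lt_mul_of_pos_right hsδ h2c
        _ = (M ^ (n i j)) i j := by field_simp
    have hpn : 0 < s ^ (n i j) := pow_pos hs0 _
    calc s ^ N * (2*c+1) ≤ s ^ (n i j) * s * (2*c+1) := by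
          apply mul_le_mul_of_nonneg_right hp (by linarith)
      _ = s ^ (n i j) * (s * (2*c+1)) := by ring
      _ < s ^ (n i j) * (M ^ (n i j)) i j := by
          exact mul_lt_mul_of_pos_left hs2 hpn
  have hIoo : Set.Ioo (0:ℝ) 1 ∈ 𝓝[>] (0:ℝ) := Ioo_mem_nhdsGT_of_mem ⟨le_refl 0, zero_lt_one⟩
  have hall := (hsmall.and ((hent.filter_mono nhdsWithin_le_nhds).and
    (Filter.eventually_mem_set.mpr hIoo))).exists
  obtain ⟨s, hsm, hb, hsIoo⟩ := hall
  obtain ⟨hs0, hs1⟩ := hsIoo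
  refine ⟨s, ⟨hs0, hs1⟩, ?_⟩
  intro i j
  have hu : IsUnit ((1 : Matrix (Fin K) (Fin K) ℝ) - s • M).det :=
    isUnit_det_one_sub M hroots ⟨hs0, hs1⟩
  have key := congrFun (congrFun (B_partial M hu N) i) j
  simp only [Matrix.add_apply, Matrix.smul_apply, smul_eq_mul] at key
  have h1 : s ^ (n i j) * (M ^ (n i j)) i j ≤ (∑ m ∈ Finset.range N, s ^ m • M ^ m) i j := by
    rw [Matrix.sum_apply]
    have := Finset.single_le_sum (f := fun m => (s ^ m • M ^ m) i j)
      (fun m _ => by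
        simp only [Matrix.smul_apply, smul_eq_mul]
        exact mul_nonneg (pow_nonneg hs0.le m) (entry_pow_nonneg M hM m i j))
      (Finset.mem_range.mpr (hnN i j))
    simpa using this
  have h2 : |(M ^ N * B s) i j| ≤ 2 * c := by
    rw [Matrix.mul_apply]
    calc |∑ k, (M ^ N) i k * B s k j| ≤ ∑ k, |(M ^ N) i k * B s k j| :=
          Finset.abs_sum_le_sum_abs _ _
      _ ≤ ∑ k, (M ^ N) i k * 2 := by
          refine Finset.sum_le_sum fun k _ => ?_
          rw [abs_mul, abs_of_nonneg (entry_pow_nonneg M hM N i k)]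
          exact mul_le_mul_of_nonneg_left (hb k j) (entry_pow_nonneg M hM N i k)
      _ = (∑ k, (M ^ N) i k) * 2 := by rw [← Finset.sum_mul]
      _ ≤ 2 * c := by have := hrow i; linarith
  have h3 : -(2*c) ≤ (M ^ N * B s) i j := by
    have := abs_le.mp h2
    linarith [this.1]
  have h4 : s ^ N * (-(2*c)) ≤ s ^ N * ((M ^ N * B s) i j) :=
    mul_le_mul_of_nonneg_left h3 (pow_nonneg hs0.le N)
  have h5 := hsm i j ⟨hs0, hs1⟩
  have h6 : 0 < s ^ N := pow_pos hs0 N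
  have : B s i j = (∑ m ∈ Finset.range N, s ^ m • M ^ m) i j + s ^ N * (M ^ N * B s) i j := key
  show 0 < B s i j
  rw [this]
  nlinarith

lemma B_nonneg_Ioo (M : Matrix (Fin K) (Fin K) ℝ) (hM : ∀ i j, 0 ≤ M i j)
    (hirr : ∀ i j, ∃ n : ℕ, 1 ≤ n ∧ 0 < (M ^ n) i j)
    (hroots : ∀ z : ℂ, (M.map Complex.ofReal).charpoly.IsRoot z → ‖z‖ ≤ 1) :
    ∀ s ∈ Set.Ioo (0:ℝ) 1, ∀ i j, 0 ≤ ((1 : Matrix (Fin K) (Fin K) ℝ) - s • M)⁻¹ i j := by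
  by_contra h
  push_neg at h
  obtain ⟨s₀, hs₀, i₀, j₀, hneg⟩ := h
  have hcover : Set.Ioo (0:ℝ) 1 ⊆
      {s : ℝ | ((1 : Matrix (Fin K) (Fin K) ℝ) - s • M).det ≠ 0
        ∧ ∀ i j, 0 < ((1 : Matrix (Fin K) (Fin K) ℝ) - s • M)⁻¹ i j}
      ∪ {s : ℝ | ((1 : Matrix (Fin K) (Fin K) ℝ) - s • M).det ≠ 0
        ∧ ∃ i j, ((1 : Matrix (Fin K) (Fin K) ℝ) - s • M)⁻¹ i j < 0} := by
    intro s hs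
    have hu := isUnit_det_one_sub M hroots hs
    have hd : ((1 : Matrix (Fin K) (Fin K) ℝ) - s • M).det ≠ 0 := hu.ne_zero
    by_cases hnn : ∀ i j, 0 ≤ ((1 : Matrix (Fin K) (Fin K) ℝ) - s • M)⁻¹ i j
    · exact Or.inl ⟨hd, B_pos_of_nonneg M hM hirr hs.1 hu hnn⟩
    · push_neg at hnn
      exact Or.inr ⟨hd, hnn⟩
  have h1 : (Set.Ioo (0:ℝ) 1 ∩
      {s : ℝ | ((1 : Matrix (Fin K) (Fin K) ℝ) - s • M).det ≠ 0
        ∧ ∀ i j, 0 < ((1 : Matrix (Fin K) (Fin K) ℝ) - s • M)⁻¹ i j}).Nonempty := by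
    obtain ⟨s, hs, hpos⟩ := exists_small_s M hM hirr hroots
    exact ⟨s, hs, (isUnit_det_one_sub M hroots hs).ne_zero, hpos⟩
  have h2 : (Set.Ioo (0:ℝ) 1 ∩
      {s : ℝ | ((1 : Matrix (Fin K) (Fin K) ℝ) - s • M).det ≠ 0
        ∧ ∃ i j, ((1 : Matrix (Fin K) (Fin K) ℝ) - s • M)⁻¹ i j < 0}).Nonempty :=
    ⟨s₀, hs₀, (isUnit_det_one_sub M hroots hs₀).ne_zero, i₀, j₀, hneg⟩
  obtain ⟨x, hxI, hxU, hxW⟩ :=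
    isPreconnected_Ioo (a := (0:ℝ)) (b := 1) _ _ (U_open M) (W_open M) hcover h1 h2
  obtain ⟨i, j, hij⟩ := hxW.2
  exact absurd (hxU.2 i j) (not_lt.mpr hij.le)

lemma exists_subinvariant (hK : 1 ≤ K) (M : Matrix (Fin K) (Fin K) ℝ)
    (hM : ∀ i j, 0 ≤ M i j)
    (hirr : ∀ i j, ∃ n : ℕ, 1 ≤ n ∧ 0 < (M ^ n) i j)
    (hroots : ∀ z : ℂ, (M.map Complex.ofReal).charpoly.IsRoot z → ‖z‖ ≤ 1) :
    ∃ y : Fin K → ℝ, (∀ i, 0 < y i) ∧ ∀ i, (M *ᵥ y) i ≤ y i := by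
  classical
  have hKne : Nonempty (Fin K) := ⟨⟨0, hK⟩⟩
  set u : ℕ → ℝ := fun m => ((m:ℝ)+1)/((m:ℝ)+2) with hudef
  have huIoo : ∀ m, u m ∈ Set.Ioo (0:ℝ) 1 := by
    intro m
    constructor
    · apply div_pos <;> positivity
    · rw [div_lt_one (by positivity)]
      linarith
  have hulim : Filter.Tendsto u Filter.atTop (𝓝 1) := by
    have h1 : ∀ m : ℕ, u m = 1 - 1/((m:ℝ)+2) := by
      intro m
      simp only [hudef]
      field_simp
      ring
    have h2 : Filter.Tendsto (fun m : ℕ => 1/((m:ℝ)+2)) Filter.atTop (𝓝 0) := by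
      apply Filter.Tendsto.div_atTop (tendsto_const_nhds)
      exact Filter.tendsto_atTop_add_const_right _ 2 tendsto_natCast_atTop_atTop
    have := (tendsto_const_nhds (x := (1:ℝ)) (f := Filter.atTop (α := ℕ))).sub h2
    rw [sub_zero] at this
    exact this.congr fun m => (h1 m).symm
  set B : ℝ → Matrix (Fin K) (Fin K) ℝ := fun s => ((1 : Matrix (Fin K) (Fin K) ℝ) - s • M)⁻¹
    with hBdef
  have hu_unit : ∀ m, IsUnit ((1 : Matrix (Fin K) (Fin K) ℝ) - u m • M).det :=
    fun m => isUnit_det_one_sub M hroots (huIoo m)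
  have hBnn : ∀ m, ∀ i j, 0 ≤ B (u m) i j :=
    fun m => B_nonneg_Ioo M hM hirr hroots (u m) (huIoo m)
  have hBdiag : ∀ m, ∀ j, 1 ≤ B (u m) j j :=
    fun m => B_diag_ge_one M hM (huIoo m).1.le (hu_unit m) (hBnn m)
  set w : ℕ → Fin K → ℝ := fun m => B (u m) *ᵥ (1 : Fin K → ℝ) with hwdef
  have hw_eq : ∀ m i, w m i = ∑ j, B (u m) i j := by
    intro m i
    rw [hwdef]
    simp [Matrix.mulVec, dotProduct]
  have hw_nonneg : ∀ m i, 0 ≤ w m i := by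
    intro m i
    rw [hw_eq]
    exact Finset.sum_nonneg fun j _ => hBnn m i j
  have hw_ge : ∀ m i, 1 ≤ w m i := by
    intro m i
    rw [hw_eq]
    calc (1:ℝ) ≤ B (u m) i i := hBdiag m i
      _ ≤ ∑ j, B (u m) i j :=
        Finset.single_le_sum (fun j _ => hBnn m i j) (Finset.mem_univ i)
  set c : ℕ → ℝ := fun m => ∑ i, w m i with hcdef
  have hc_pos : ∀ m, 0 < c m := by
    intro m
    have : (1:ℝ) ≤ c m := by
      calc (1:ℝ) ≤ w m (Classical.arbitrary (Fin K)) := hw_ge m _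
        _ ≤ ∑ i, w m i := Finset.single_le_sum (fun i _ => hw_nonneg m i) (Finset.mem_univ _)
    linarith
  set v : ℕ → Fin K → ℝ := fun m => (c m)⁻¹ • w m with hvdef
  -- the invariance inequality for w
  have hw_inv : ∀ m i, u m * (M *ᵥ w m) i = w m i - 1 := by
    intro m i
    have h1 : ((1 : Matrix (Fin K) (Fin K) ℝ) - u m • M) *ᵥ w m = (1 : Fin K → ℝ) := by
      rw [hwdef]
      rw [Matrix.mulVec_mulVec, Matrix.mul_nonsing_inv _ (hu_unit m), Matrix.one_mulVec]
    have h2 := congrFun h1 i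
    rw [Matrix.sub_mulVec, Matrix.one_mulVec, Matrix.smul_mulVec] at h2
    simp only [Pi.sub_apply, Pi.smul_apply, smul_eq_mul, Pi.one_apply] at h2
    linarith
  have hkey : ∀ m i, u m * (M *ᵥ v m) i ≤ v m i := by
    intro m i
    have h1 : (M *ᵥ v m) i = (c m)⁻¹ * (M *ᵥ w m) i := by
      rw [hvdef]
      simp only [Matrix.mulVec_smul, Pi.smul_apply, smul_eq_mul]
    rw [h1, hvdef]
    simp only [Pi.smul_apply, smul_eq_mul]
    have h2 := hw_inv m i
    have h3 : (0:ℝ) < (c m)⁻¹ := inv_pos.mpr (hc_pos m)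
    calc u m * ((c m)⁻¹ * (M *ᵥ w m) i) = (c m)⁻¹ * (u m * (M *ᵥ w m) i) := by ring
      _ = (c m)⁻¹ * (w m i - 1) := by rw [h2]
      _ ≤ (c m)⁻¹ * w m i := by nlinarith
  -- v m lies in the compact simplex
  set S : Set (Fin K → ℝ) := {y | (∀ i, 0 ≤ y i) ∧ ∑ i, y i = 1} with hSdef
  have hvS : ∀ m, v m ∈ S := by
    intro m
    constructor
    · intro i
      exact mul_nonneg (inv_pos.mpr (hc_pos m)).le (hw_nonneg m i)
    · rw [hvdef]
      simp only [Pi.smul_apply, smul_eq_mul, ← Finset.mul_sum]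
      exact inv_mul_cancel₀ (hc_pos m).ne'
  have hS_closed : IsClosed S := by
    have : S = (⋂ i, {y : Fin K → ℝ | 0 ≤ y i}) ∩ {y : Fin K → ℝ | ∑ i, y i = 1} := by
      ext y; simp [hSdef, Set.mem_iInter]
    rw [this]
    exact IsClosed.inter (isClosed_iInter fun i => isClosed_le continuous_const (continuous_apply i))
      (isClosed_eq (continuous_finset_sum _ fun i _ => continuous_apply i) continuous_const)
  have hS_sub : S ⊆ Set.Icc (0 : Fin K → ℝ) 1 := by
    intro y hy
    rw [Set.mem_Icc]
    constructor
    · intro i; exact hy.1 i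
    · intro i
      calc y i ≤ ∑ j, y j := Finset.single_le_sum (fun j _ => hy.1 j) (Finset.mem_univ i)
        _ = 1 := hy.2
  have hS_cpt : IsCompact S := IsCompact.of_isClosed_subset isCompact_Icc hS_closed hS_sub
  obtain ⟨y, hyS, φ, hφ, hlim⟩ := hS_cpt.tendsto_subseq (fun m => hvS m)
  -- pass to the limit
  have hMy : ∀ i, (M *ᵥ y) i ≤ y i := by
    intro i
    have hA : Filter.Tendsto (fun m => v (φ m) i) Filter.atTop (𝓝 (y i)) :=
      (((continuous_apply i).tendsto _).comp hlim)
    have hgc : Continuous fun x : Fin K → ℝ => (M *ᵥ x) i := by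
      have : (fun x : Fin K → ℝ => (M *ᵥ x) i) = fun x => ∑ j, M i j * x j := by
        funext x
        simp [Matrix.mulVec, dotProduct]
      rw [this]
      exact continuous_finset_sum _ fun j _ => continuous_const.mul (continuous_apply j)
    have hB2 : Filter.Tendsto (fun m => (M *ᵥ v (φ m)) i) Filter.atTop (𝓝 ((M *ᵥ y) i)) :=
      (hgc.tendsto _).comp hlim
    have hu2 : Filter.Tendsto (fun m => u (φ m)) Filter.atTop (𝓝 1) :=
      hulim.comp hφ.tendsto_atTop
    have hprod := hu2.mul hB2
    rw [one_mul] at hprod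
    exact le_of_tendsto_of_tendsto' hprod hA fun m => hkey (φ m) i
  have hy0 : ∀ i, 0 ≤ y i := hyS.1
  have hysum : ∑ i, y i = 1 := hyS.2
  have hj : ∃ j, 0 < y j := by
    by_contra h
    push_neg at h
    have : ∀ i, y i = 0 := fun i => le_antisymm (h i) (hy0 i)
    rw [Finset.sum_congr rfl fun i _ => this i] at hysum
    simp at hysum
  obtain ⟨j, hj⟩ := hj
  have hMn : ∀ n, ∀ i, ((M ^ n) *ᵥ y) i ≤ y i := by
    intro n
    induction n with
    | zero => intro i; simp [Matrix.one_mulVec]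
    | succ n ih =>
      intro i
      have h1 : (M ^ (n+1)) *ᵥ y = M *ᵥ ((M ^ n) *ᵥ y) := by
        rw [Matrix.mulVec_mulVec, ← pow_succ']
      rw [h1]
      have h2 : (M *ᵥ ((M ^ n) *ᵥ y)) i ≤ (M *ᵥ y) i := by
        simp only [Matrix.mulVec, dotProduct]
        exact Finset.sum_le_sum fun k _ => mul_le_mul_of_nonneg_left (ih k) (hM i k)
      exact le_trans h2 (hMy i)
  refine ⟨y, fun i => ?_, hMy⟩
  obtain ⟨n, -, hn⟩ := hirr i j
  have h1 : (M ^ n) i j * y j ≤ ((M ^ n) *ᵥ y) i := by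
    simp only [Matrix.mulVec, dotProduct]
    exact Finset.single_le_sum
      (f := fun k => (M ^ n) i k * y k)
      (fun k _ => mul_nonneg (entry_pow_nonneg M hM n i k) (hy0 k)) (Finset.mem_univ j)
  have h2 : 0 < (M ^ n) i j * y j := mul_pos hn hj
  linarith [hMn n i]

end Stmt4Aux

open Topology

/-- If `M` is irreducible (for every pair `(i,j)` there is `n ≥ 1` with
`(Mⁿ)_{ij} > 0`) and `ρ(M) ≤ 1`, then the fluid model is weakly stable: every fluid model
solution with `Q 0 = 0` satisfies `Q t = 0` for all `t ≥ 0`. -/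
theorem stmt4 {K : ℕ} (hK : 1 ≤ K) (fd : FluidData K)
    (hirr : ∀ i j, ∃ n : ℕ, 1 ≤ n ∧ 0 < (fd.M ^ n) i j)
    (hρ : specRad fd.M ≤ 1)
    (sol : FluidSol fd) (h0 : sol.Q 0 = 0) :
    ∀ t : ℝ, 0 ≤ t → sol.Q t = 0 := by
  classical
  -- nonnegativity of M
  have hGinv : fd.G⁻¹ = Matrix.diagonal (fun i => (fd.μ i)⁻¹) := by
    apply Matrix.inv_eq_left_inv
    rw [FluidData.G, Matrix.diagonal_mul_diagonal]
    have : (fun i => (fd.μ i)⁻¹ * fd.μ i) = fun _ => (1:ℝ) := by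
      funext i
      exact inv_mul_cancel₀ (fd.μ_pos i).ne'
    rw [this, Matrix.diagonal_one]
  have hMnn : ∀ i j, 0 ≤ fd.M i j := by
    intro i j
    rw [FluidData.M, hGinv, Matrix.diagonal_mul]
    exact mul_nonneg (inv_nonneg.mpr (fd.μ_pos i).le) (fd.Λ_nonneg i j)
  have hroots : ∀ z : ℂ, (fd.M.map Complex.ofReal).charpoly.IsRoot z → ‖z‖ ≤ 1 :=
    fun z hz => root_bound fd.M hρ hz
  obtain ⟨y, hy_pos, hy_sub⟩ := exists_subinvariant hK fd.M hMnn hirr hroots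
  intro t₀ ht₀
  by_contra hQ
  -- continuity
  have hTc : ∀ i, Continuous fun t => sol.T t i := fun i => (sol.T_lip i).choose_spec.continuous
  set Y : ℝ → ℝ := fun t => t - ∑ i, sol.T t i with hYdef
  have hYc : Continuous Y := continuous_id.sub (continuous_finset_sum _ fun i _ => hTc i)
  set F : ℝ → Fin K → ℝ := fun t i =>
      (∑ j, (fd.M.transpose - 1) i j * (fd.μ j * sol.T t j)) + Y t * fd.lam0 i with hFdef
  have hGmv : ∀ t, fd.G *ᵥ sol.T t = fun j => fd.μ j * sol.T t j := by
    intro t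
    funext j
    rw [FluidData.G, Matrix.mulVec_diagonal]
  have hQF : ∀ t, 0 ≤ t → ∀ i, sol.Q t i = F t i := by
    intro t ht i
    have h := congrFun (sol.dynamics t ht) i
    rw [h0, hGmv t] at h
    simp only [Pi.add_apply, Pi.zero_apply, Pi.smul_apply, smul_eq_mul, zero_add] at h
    rw [h]
    simp only [hFdef, hYdef, Matrix.mulVec, dotProduct]
  have hFc : ∀ i, Continuous fun t => F t i := by
    intro i
    apply Continuous.add
    · exact continuous_finset_sum _ fun j _ => continuous_const.mul (continuous_const.mul (hTc j))
    · exact hYc.mul continuous_const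
  -- the last zero time
  set Z : Set ℝ := {u | u ∈ Set.Icc 0 t₀ ∧ ∀ i, F u i = 0} with hZdef
  have hZc : IsClosed Z := by
    have : Z = Set.Icc 0 t₀ ∩ ⋂ i, (fun u => F u i) ⁻¹' {0} := by
      ext u
      simp [hZdef, Set.mem_iInter]
    rw [this]
    exact isClosed_Icc.inter (isClosed_iInter fun i => isClosed_singleton.preimage (hFc i))
  have hZne : (0:ℝ) ∈ Z := by
    refine ⟨⟨le_refl 0, ht₀⟩, fun i => ?_⟩
    rw [← hQF 0 (le_refl 0) i, h0]
    rfl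
  have hZbdd : BddAbove Z := ⟨t₀, fun u hu => hu.1.2⟩
  set s := sSup Z with hsdef
  have hsZ : s ∈ Z := hZc.csSup_mem ⟨0, hZne⟩ hZbdd
  have hs0 : 0 ≤ s := hsZ.1.1
  have hst : s ≤ t₀ := hsZ.1.2
  have hQs : sol.Q s = 0 := by
    funext i
    rw [hQF s hs0 i]
    exact hsZ.2 i
  have hslt : s < t₀ := by
    rcases lt_or_eq_of_le hst with h | h
    · exact h
    · exact absurd (h ▸ hQs) hQ
  have hQne : ∀ u, u ∈ Set.Ioc s t₀ → sol.Q u ≠ 0 := by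
    intro u hu hQu
    have hu0 : 0 ≤ u := le_trans hs0 hu.1.le
    have huZ : u ∈ Z := by
      refine ⟨⟨hu0, hu.2⟩, fun i => ?_⟩
      rw [← hQF u hu0 i, hQu]
      rfl
    exact absurd (le_csSup hZbdd huZ) (not_le.mpr hu.1)
  -- Y s = Y t₀ via non-idling and continuity
  have hYconst : Y s = Y t₀ := by
    set d : ℝ := t₀ - s with hddef
    have hd : 0 < d := sub_pos.mpr hslt
    set wn : ℕ → ℝ := fun m => s + d/((m:ℝ)+2) with hwdef
    have hwn_mem : ∀ m, wn m ∈ Set.Ioc s t₀ := by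
      intro m
      constructor
      · have : 0 < d/((m:ℝ)+2) := by positivity
        simp only [hwdef]
        linarith
      · have : d/((m:ℝ)+2) ≤ d := div_le_self hd.le (by have := Nat.cast_nonneg (α := ℝ) m; linarith)
        simp only [hwdef, hddef]
        linarith
    have hwY : ∀ m, Y (wn m) = Y t₀ := by
      intro m
      have h1 : 0 ≤ wn m := le_trans hs0 (hwn_mem m).1.le
      have h2 : wn m ≤ t₀ := (hwn_mem m).2
      exact sol.nonidling (wn m) t₀ h1 h2 fun u hu =>
        hQne u ⟨lt_of_lt_of_le (hwn_mem m).1 hu.1, hu.2⟩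
    have hlim : Filter.Tendsto wn Filter.atTop (𝓝 s) := by
      have h2 : Filter.Tendsto (fun m : ℕ => d/((m:ℝ)+2)) Filter.atTop (𝓝 0) := by
        apply Filter.Tendsto.div_atTop tendsto_const_nhds
        exact Filter.tendsto_atTop_add_const_right _ 2 tendsto_natCast_atTop_atTop
      have := (tendsto_const_nhds (x := s) (f := Filter.atTop (α := ℕ))).add h2
      rw [add_zero] at this
      exact this
    have h1 : Filter.Tendsto (fun m => Y (wn m)) Filter.atTop (𝓝 (Y s)) :=
      (hYc.tendsto s).comp hlim
    have h2 : Filter.Tendsto (fun m => Y (wn m)) Filter.atTop (𝓝 (Y t₀)) := by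
      rw [show (fun m => Y (wn m)) = fun _ => Y t₀ from funext hwY]
      exact tendsto_const_nhds
    exact tendsto_nhds_unique h1 h2
  -- final contradiction
  set vv : Fin K → ℝ := fun j => fd.μ j * (sol.T t₀ j - sol.T s j) with hvvdef
  have hvv : ∀ j, 0 ≤ vv j := by
    intro j
    apply mul_nonneg (fd.μ_pos j).le
    rw [sub_nonneg]
    exact sol.T_mono j hs0 ht₀ hslt.le
  have hQt : ∀ i, sol.Q t₀ i = ∑ j, (fd.M.transpose - 1) i j * vv j := by
    intro i
    rw [hQF t₀ ht₀ i]
    have h2 := hsZ.2 i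
    simp only [hFdef] at h2 ⊢
    rw [hYconst] at h2
    have hsplit : ∑ j, (fd.M.transpose - 1) i j * vv j
        = (∑ j, (fd.M.transpose - 1) i j * (fd.μ j * sol.T t₀ j))
          - ∑ j, (fd.M.transpose - 1) i j * (fd.μ j * sol.T s j) := by
      rw [← Finset.sum_sub_distrib]
      apply Finset.sum_congr rfl
      intro j _
      simp only [hvvdef]
      ring
    rw [hsplit]
    linarith
  have hQpos : 0 < ∑ i, y i * sol.Q t₀ i := by
    obtain ⟨i₀, hi₀⟩ := Function.ne_iff.mp hQ
    have hne : sol.Q t₀ i₀ ≠ 0 := by simpa using hi₀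
    have hpos : 0 < sol.Q t₀ i₀ := lt_of_le_of_ne (sol.Q_nonneg t₀ ht₀ i₀) (Ne.symm hne)
    apply Finset.sum_pos'
    · intro i _
      exact mul_nonneg (hy_pos i).le (sol.Q_nonneg t₀ ht₀ i)
    · exact ⟨i₀, Finset.mem_univ i₀, mul_pos (hy_pos i₀) hpos⟩
  have hQnonpos : ∑ i, y i * sol.Q t₀ i ≤ 0 := by
    have hswap : ∑ i, y i * sol.Q t₀ i = ∑ j, ((fd.M *ᵥ y) j - y j) * vv j := by
      calc ∑ i, y i * sol.Q t₀ i
          = ∑ i, ∑ j, y i * ((fd.M.transpose - 1) i j * vv j) := by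
            apply Finset.sum_congr rfl
            intro i _
            rw [hQt i, Finset.mul_sum]
        _ = ∑ j, ∑ i, y i * ((fd.M.transpose - 1) i j * vv j) := Finset.sum_comm
        _ = ∑ j, ((fd.M *ᵥ y) j - y j) * vv j := by
            apply Finset.sum_congr rfl
            intro j _
            have : ∑ i, y i * ((fd.M.transpose - 1) i j * vv j)
                = (∑ i, (fd.M.transpose - 1) i j * y i) * vv j := by
              rw [Finset.sum_mul]
              apply Finset.sum_congr rfl
              intro i _
              ring
            rw [this]
            congr 1
            have : ∑ i, (fd.M.transpose - 1) i j * y i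
                = (∑ i, fd.M j i * y i) - ∑ i, (1 : Matrix (Fin K) (Fin K) ℝ) i j * y i := by
              rw [← Finset.sum_sub_distrib]
              apply Finset.sum_congr rfl
              intro i _
              rw [Matrix.sub_apply, Matrix.transpose_apply]
              ring
            rw [this]
            congr 1
            calc ∑ i, (1 : Matrix (Fin K) (Fin K) ℝ) i j * y i
              = ∑ i, (if i = j then y i else 0) := by
                  apply Finset.sum_congr rfl
                  intro i _
                  rw [Matrix.one_apply]
                  split_ifs <;> simp
              _ = y j := by rw [Finset.sum_ite_eq' Finset.univ j y]; simp
    rw [hswap]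
    apply Finset.sum_nonpos
    intro j _
    exact mul_nonpos_iff.mpr (Or.inr ⟨sub_nonpos.mpr (hy_sub j), hvv j⟩)
  linarith
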